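/- arXiv:1904.11333 — 4 statements merged into one kernel-verified Lean document; each statement's English description precedes it below -/
import Mathlib

section
/- For coprime positive integers c and d, the Dedekind sums satisfy the reciprocity law s(c, d) + s(d, c) = (1/12)(c/d + d/c + 1/(cd)) - 1/4. -/
open Classical in
/-- The sawtooth function `((x))`. -/
noncomputable def sawtooth (x : ℝ) : ℝ :=
  if ∃ n : ℤ, x = (n : ℝ) then 0 else x - ⌊x⌋ - 1/2

/-- The Dedekind sum `s(d, c)`. -/
noncomputable def dedekindSum (d c : ℤ) : ℝ :=
  ∑ m ∈ Finset.range c.toNat, sawtooth ((d : ℝ) * m / c) * sawtooth ((m : ℝ) / c)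

private lemma floor_intCast_div (m k : ℤ) (hk : 0 < k) : ⌊(m : ℝ) / (k : ℝ)⌋ = m / k := by
  have hk' : (k.toNat : ℤ) = k := Int.toNat_of_nonneg hk.le
  rw [show ((m : ℝ) / (k : ℝ)) = (((m : ℚ) / (k.toNat : ℚ) : ℚ) : ℝ) by
      push_cast; rw [show ((k.toNat:ℕ):ℝ) = ((k:ℤ):ℝ) by exact_mod_cast congrArg (fun z : ℤ => (z:ℝ)) hk'],
    Rat.floor_cast, Rat.floor_intCast_div_natCast, hk']

private lemma sawtooth_eq (a k : ℤ) (hk : 0 < k) (hnd : ¬ (k ∣ a)) :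
    sawtooth ((a : ℝ) / (k : ℝ)) = ((a % k : ℤ) : ℝ) / k - 1/2 := by
  have hk0 : (k : ℝ) ≠ 0 := by positivity
  rw [sawtooth, if_neg]
  · rw [floor_intCast_div a k hk, Int.emod_def]; push_cast; field_simp
  · rintro ⟨n, hn⟩
    rw [div_eq_iff hk0] at hn
    exact hnd ⟨n, by exact_mod_cast mul_comm (n:ℝ) (k:ℝ) ▸ hn⟩

private lemma sawtooth_zero : sawtooth 0 = 0 := by
  rw [sawtooth, if_pos ⟨0, by norm_num⟩]

private lemma sum_emod_perm (h k : ℤ) (hk : 0 < k) (hcop : IsCoprime h k) (F : ℤ → ℤ) :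
    ∑ m ∈ Finset.Ico (0:ℤ) k, F (h * m % k) = ∑ m ∈ Finset.Ico (0:ℤ) k, F m := by
  obtain ⟨u, v, huv⟩ := hcop
  refine Finset.sum_nbij' (i := fun m => h * m % k) (j := fun m => u * m % k)
    (fun a _ => ?_) (fun a _ => ?_) (fun a ha => ?_) (fun a ha => ?_) (fun a _ => rfl)
  · exact Finset.mem_Ico.mpr ⟨Int.emod_nonneg _ hk.ne', Int.emod_lt_of_pos _ hk⟩
  · exact Finset.mem_Ico.mpr ⟨Int.emod_nonneg _ hk.ne', Int.emod_lt_of_pos _ hk⟩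
  · simp only [Finset.mem_Ico] at ha
    rw [Int.mul_emod, Int.emod_emod_of_dvd _ dvd_rfl, ← Int.mul_emod,
      show u * (h * a) = a + (-(v*a)) * k by linear_combination a * huv,
      Int.add_mul_emod_self_right]
    exact Int.emod_eq_of_lt ha.1 ha.2
  · simp only [Finset.mem_Ico] at ha
    rw [Int.mul_emod, Int.emod_emod_of_dvd _ dvd_rfl, ← Int.mul_emod,
      show h * (u * a) = a + (-(v*a)) * k by linear_combination a * huv,
      Int.add_mul_emod_self_right]
    exact Int.emod_eq_of_lt ha.1 ha.2

private lemma sum_emod_perm' (h k : ℤ) (hk : 0 < k) (hcop : IsCoprime h k) (F : ℤ → ℤ) :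
    ∑ m ∈ Finset.Ico (1:ℤ) k, F (h * m % k) = ∑ m ∈ Finset.Ico (1:ℤ) k, F m := by
  have h0 : Finset.Ico (0:ℤ) k = insert 0 (Finset.Ico 1 k) := by
    ext x; simp only [Finset.mem_Ico, Finset.mem_insert]; omega
  have h1 := sum_emod_perm h k hk hcop F
  rw [h0, Finset.sum_insert (by simp), Finset.sum_insert (by simp)] at h1
  simpa using h1

private lemma Ico_succ_insert (a n : ℤ) (h : a ≤ n) :
    Finset.Ico a (n+1) = insert n (Finset.Ico a n) := by
  ext x; simp only [Finset.mem_Ico, Finset.mem_insert]; omega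

private lemma sum_Ico_id : ∀ k:ℤ, 1 ≤ k → (∑ m ∈ Finset.Ico (1:ℤ) k, m) * 2 = k * (k-1) := by
  refine Int.le_induction ?_ ?_
  · simp
  · intro n hn ih; rw [Ico_succ_insert 1 n hn, Finset.sum_insert (by simp)]; linear_combination ih

private lemma sum_Ico_sq : ∀ k:ℤ, 1 ≤ k →
    (∑ m ∈ Finset.Ico (1:ℤ) k, m^2) * 6 = k * (k-1) * (2*k-1) := by
  refine Int.le_induction ?_ ?_
  · simp
  · intro n hn ih; rw [Ico_succ_insert 1 n hn, Finset.sum_insert (by simp)]; linear_combination ih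

private lemma sum_Ico_odd : ∀ n:ℤ, 0 ≤ n →
    (∑ s ∈ Finset.Ico (1:ℤ) (n+1), (2*s-1)) = n^2 := by
  refine Int.le_induction ?_ ?_
  · simp
  · intro n hn ih; rw [Ico_succ_insert 1 (n+1) (by omega), Finset.sum_insert (by simp)]; linear_combination ih

/-- For coprime `h k` and `1 ≤ r < k`, `k` does not divide `h*r`. -/
private lemma not_dvd_mul (h k r : ℤ) (hcop : IsCoprime k h) (hr1 : 1 ≤ r) (hrk : r < k) :
    ¬ (k ∣ h * r) := by
  intro hdvd
  have : k ∣ r := hcop.dvd_of_dvd_mul_left hdvd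
  have := Int.le_of_dvd (by omega) this
  omega

private lemma filter_lt_eq (h k r : ℤ) (hk : 0 < k) (hh : 0 < h) (hcop : IsCoprime k h)
    (hr : r ∈ Finset.Ico (1:ℤ) k) :
    Finset.filter (fun s => s * k < h * r) (Finset.Ico (1:ℤ) h) =
      Finset.Ico 1 (h * r / k + 1) := by
  simp only [Finset.mem_Ico] at hr
  have hfle : h * r / k < h := by
    rw [Int.ediv_lt_iff_lt_mul hk]
    exact mul_lt_mul_of_pos_left hr.2 hh
  ext s
  simp only [Finset.mem_filter, Finset.mem_Ico]
  constructor
  · rintro ⟨⟨hs1, _⟩, hlt⟩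
    refine ⟨hs1, ?_⟩
    have : s ≤ h * r / k := (Int.le_ediv_iff_mul_le hk).mpr hlt.le
    omega
  · rintro ⟨hs1, hs2⟩
    have hle : s * k ≤ h * r := (Int.le_ediv_iff_mul_le hk).mp (by omega)
    have hne : s * k ≠ h * r := by
      intro heq
      exact not_dvd_mul h k r hcop hr.1 hr.2 ⟨s, by linarith⟩
    exact ⟨⟨hs1, by omega⟩, lt_of_le_of_ne hle hne⟩

private lemma filter_gt_eq (h k s : ℤ) (hk : 0 < k) (hh : 0 < h)
    (hs : s ∈ Finset.Ico (1:ℤ) h) :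
    Finset.filter (fun r => s * k < h * r) (Finset.Ico (1:ℤ) k) =
      Finset.Ico (k * s / h + 1) k := by
  simp only [Finset.mem_Ico] at hs
  have hg0 : 0 ≤ k * s / h := Int.ediv_nonneg (mul_nonneg hk.le (by omega)) hh.le
  ext r
  simp only [Finset.mem_filter, Finset.mem_Ico]
  have key : k * s / h < r ↔ k * s < r * h := Int.ediv_lt_iff_lt_mul hh
  constructor
  · rintro ⟨⟨hr1, hr2⟩, hlt⟩
    have : k * s < r * h := by linarith [hlt]
    have := key.mpr this
    omega
  · rintro ⟨hr1, hr2⟩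
    have : k * s < r * h := key.mp (by omega)
    exact ⟨⟨by omega, hr2⟩, by linarith⟩

private lemma dedekindSum_eq (d c : ℤ) (hc : 0 < c) :
    dedekindSum d c = ∑ m ∈ Finset.Ico (1:ℤ) c,
      sawtooth ((d:ℝ) * (m:ℝ) / c) * sawtooth ((m:ℝ)/c) := by
  rw [dedekindSum]
  have h1 : ∑ m ∈ Finset.range c.toNat, sawtooth ((d : ℝ) * m / c) * sawtooth ((m : ℝ) / c)
      = ∑ m ∈ Finset.Ico (0:ℤ) c, sawtooth ((d:ℝ) * (m:ℝ) / c) * sawtooth ((m:ℝ)/c) := by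
    refine Finset.sum_nbij' (i := fun (m:ℕ) => (m:ℤ)) (j := Int.toNat) ?_ ?_ ?_ ?_ ?_
    · intro a ha; simp only [Finset.mem_range] at ha; simp only [Finset.mem_Ico]; omega
    · intro a ha; simp only [Finset.mem_Ico] at ha; simp only [Finset.mem_range]; omega
    · intro a _; simp
    · intro a ha; simp only [Finset.mem_Ico] at ha; simp [Int.toNat_of_nonneg ha.1]
    · intro a _; norm_num
  rw [h1, show Finset.Ico (0:ℤ) c = insert 0 (Finset.Ico 1 c) by
      ext x; simp only [Finset.mem_Ico, Finset.mem_insert]; omega,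
    Finset.sum_insert (by simp)]
  norm_num [sawtooth_zero]

private lemma dedekind_poly (h k : ℤ) (hh : 0 < h) (hk : 0 < k) (hcop : IsCoprime k h) :
    dedekindSum h k * ((k:ℝ)^2 * 4) =
      ((∑ r ∈ Finset.Ico (1:ℤ) k, r * (h * r % k) : ℤ) : ℝ) * 4 - ((k:ℝ)-1) * (k:ℝ)^2 := by
  have hk0 : (k:ℝ) ≠ 0 := by exact_mod_cast hk.ne'
  rw [dedekindSum_eq h k hk]
  have hsaw : ∀ r ∈ Finset.Ico (1:ℤ) k,
      sawtooth ((h:ℝ) * (r:ℝ) / k) * sawtooth ((r:ℝ)/k)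
        = (((h * r % k : ℤ):ℝ)/k - 1/2) * ((r:ℝ)/k - 1/2) := by
    intro r hr
    simp only [Finset.mem_Ico] at hr
    have e1 : sawtooth ((h:ℝ) * (r:ℝ) / k) = ((h * r % k : ℤ):ℝ)/k - 1/2 := by
      have h2 := sawtooth_eq (h*r) k hk (not_dvd_mul h k r hcop hr.1 hr.2)
      rw [← h2]; push_cast; ring_nf
    have e2 : sawtooth ((r:ℝ)/k) = (r:ℝ)/k - 1/2 := by
      have hnd : ¬ (k ∣ r) := by
        intro hd; have := Int.le_of_dvd (by omega) hd; omega
      rw [sawtooth_eq r k hk hnd, Int.emod_eq_of_lt (by omega) hr.2]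
    rw [e1, e2]
  rw [Finset.sum_congr rfl hsaw, Finset.sum_mul]
  have expand : ∀ r ∈ Finset.Ico (1:ℤ) k,
      ((((h * r % k : ℤ):ℝ))/k - 1/2) * ((r:ℝ)/k - 1/2) * ((k:ℝ)^2*4)
      = (((r * (h * r % k) : ℤ):ℝ) * 4 - ((h*r%k : ℤ):ℝ) * (2*(k:ℝ))
          - (r:ℝ)*(2*(k:ℝ)) + (k:ℝ)^2) := by
    intro r _; push_cast; field_simp; ring
  rw [Finset.sum_congr rfl expand]
  simp only [Finset.sum_add_distrib, Finset.sum_sub_distrib, ← Finset.sum_mul,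
    Finset.sum_const, nsmul_eq_mul, Int.card_Ico]
  have hcard : (((k - 1).toNat : ℕ) : ℝ) = (k:ℝ) - 1 := by
    have : ((k-1).toNat : ℤ) = k - 1 := Int.toNat_of_nonneg (by omega)
    exact_mod_cast congrArg (fun z : ℤ => (z:ℝ)) this
  have hM : (∑ r ∈ Finset.Ico (1:ℤ) k, h * r % k) = ∑ r ∈ Finset.Ico (1:ℤ) k, r :=
    sum_emod_perm' h k hk hcop.symm id
  have hR : (∑ r ∈ Finset.Ico (1:ℤ) k, r) * 2 = k * (k-1) := sum_Ico_id k hk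
  have cast1 : (∑ r ∈ Finset.Ico (1:ℤ) k, ((h * r % k : ℤ):ℝ))
      = ((∑ r ∈ Finset.Ico (1:ℤ) k, (h * r % k) : ℤ) : ℝ) := by push_cast; rfl
  have cast2 : (∑ r ∈ Finset.Ico (1:ℤ) k, (r:ℝ))
      = ((∑ r ∈ Finset.Ico (1:ℤ) k, r : ℤ) : ℝ) := by push_cast; rfl
  have cast3 : (∑ r ∈ Finset.Ico (1:ℤ) k, ((r * (h * r % k) : ℤ):ℝ))
      = ((∑ r ∈ Finset.Ico (1:ℤ) k, r * (h * r % k) : ℤ) : ℝ) := by push_cast; rfl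
  rw [cast1, cast2, cast3, hcard, hM]
  have hRR : ((∑ r ∈ Finset.Ico (1:ℤ) k, r : ℤ) : ℝ) * 2 = (k:ℝ) * ((k:ℝ)-1) := by
    exact_mod_cast congrArg (fun z : ℤ => (z:ℝ)) hR
  linear_combination (-2*(k:ℝ)) * hRR

private lemma ded_e1 (h k : ℤ) :
    ∑ r ∈ Finset.Ico (1:ℤ) k, r * (h * r % k)
      = h * (∑ r ∈ Finset.Ico (1:ℤ) k, r^2)
        - k * (∑ r ∈ Finset.Ico (1:ℤ) k, r * (h * r / k)) := by
  rw [Finset.mul_sum, Finset.mul_sum, ← Finset.sum_sub_distrib]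
  exact Finset.sum_congr rfl fun r _ => by rw [Int.emod_def]; ring

private lemma ded_e2 (h k : ℤ) (hk : 0 < k) (hcop : IsCoprime h k) :
    h^2 * (∑ r ∈ Finset.Ico (1:ℤ) k, r^2)
      - 2*(h*k) * (∑ r ∈ Finset.Ico (1:ℤ) k, r * (h * r / k))
      + k^2 * (∑ r ∈ Finset.Ico (1:ℤ) k, (h * r / k)^2)
    = ∑ r ∈ Finset.Ico (1:ℤ) k, r^2 := by
  have hperm := sum_emod_perm' h k hk hcop (fun x => x^2)
  calc h^2 * (∑ r ∈ Finset.Ico (1:ℤ) k, r^2)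
      - 2*(h*k) * (∑ r ∈ Finset.Ico (1:ℤ) k, r * (h * r / k))
      + k^2 * (∑ r ∈ Finset.Ico (1:ℤ) k, (h * r / k)^2)
      = ∑ r ∈ Finset.Ico (1:ℤ) k, (h * r % k)^2 := by
        simp only [Finset.mul_sum, ← Finset.sum_sub_distrib, ← Finset.sum_add_distrib]
        exact (Finset.sum_congr rfl fun r _ => by rw [Int.emod_def]; ring).symm
    _ = ∑ r ∈ Finset.Ico (1:ℤ) k, r^2 := hperm

private lemma ded_e4 (h k : ℤ) (hk : 0 < k) (hcop : IsCoprime h k) :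
    2 * (∑ r ∈ Finset.Ico (1:ℤ) k, h * r / k) = (h-1) * (k-1) := by
  have hperm := sum_emod_perm' h k hk hcop id
  simp only [id] at hperm
  have expand : ∑ r ∈ Finset.Ico (1:ℤ) k, h * r % k
      = h * (∑ r ∈ Finset.Ico (1:ℤ) k, r) - k * (∑ r ∈ Finset.Ico (1:ℤ) k, h * r / k) := by
    rw [Finset.mul_sum, Finset.mul_sum, ← Finset.sum_sub_distrib]
    exact Finset.sum_congr rfl fun r _ => Int.emod_def _ _
  have hid := sum_Ico_id k hk
  refine mul_left_cancel₀ hk.ne' ?_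
  linear_combination 2 * expand - 2 * hperm + (h-1) * hid

private lemma ded_e3 (h k : ℤ) (hh : 0 < h) (hk : 0 < k) (hcop : IsCoprime k h) :
    ∑ r ∈ Finset.Ico (1:ℤ) k, (h * r / k)^2
    = (k-1)*(h-1)^2 - 2 * (∑ s ∈ Finset.Ico (1:ℤ) h, s * (k * s / h))
        + ∑ s ∈ Finset.Ico (1:ℤ) h, k * s / h := by
  have step1 : ∀ r ∈ Finset.Ico (1:ℤ) k, (h * r / k)^2
      = ∑ s ∈ Finset.Ico (1:ℤ) h, (if s * k < h * r then 2*s-1 else 0) := by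
    intro r hr
    have hr' := Finset.mem_Ico.mp hr
    rw [← Finset.sum_filter, filter_lt_eq h k r hk hh hcop hr,
      sum_Ico_odd _ (Int.ediv_nonneg (mul_nonneg hh.le (by omega)) hk.le)]
  have step2 : ∀ s ∈ Finset.Ico (1:ℤ) h,
      (∑ r ∈ Finset.Ico (1:ℤ) k, if s * k < h * r then 2*s-1 else 0)
      = (2*s-1) * (k - 1 - k * s / h) := by
    intro s hs
    have hs' := Finset.mem_Ico.mp hs
    have hlt : k * s / h < k := by
      rw [Int.ediv_lt_iff_lt_mul hh]
      exact mul_lt_mul_of_pos_left hs'.2 hk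
    rw [← Finset.sum_filter, filter_gt_eq h k s hk hh hs, Finset.sum_const,
      nsmul_eq_mul, Int.card_Ico, Int.toNat_of_nonneg (by omega)]
    ring
  calc ∑ r ∈ Finset.Ico (1:ℤ) k, (h * r / k)^2
      = ∑ r ∈ Finset.Ico (1:ℤ) k, ∑ s ∈ Finset.Ico (1:ℤ) h,
          (if s * k < h * r then 2*s-1 else 0) := Finset.sum_congr rfl step1
    _ = ∑ s ∈ Finset.Ico (1:ℤ) h, ∑ r ∈ Finset.Ico (1:ℤ) k,
          (if s * k < h * r then 2*s-1 else 0) := Finset.sum_comm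
    _ = ∑ s ∈ Finset.Ico (1:ℤ) h, (2*s-1) * (k - 1 - k * s / h) :=
          Finset.sum_congr rfl step2
    _ = (k-1)*(h-1)^2 - 2 * (∑ s ∈ Finset.Ico (1:ℤ) h, s * (k * s / h))
          + ∑ s ∈ Finset.Ico (1:ℤ) h, k * s / h := by
        have expand : ∀ s ∈ Finset.Ico (1:ℤ) h, (2*s-1) * (k - 1 - k * s / h)
            = (k-1)*(2*s-1) - 2*(s*(k*s/h)) + k*s/h := fun s _ => by ring
        rw [Finset.sum_congr rfl expand]
        have hodd := sum_Ico_odd (h-1) (by omega)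
        rw [sub_add_cancel] at hodd
        have split : ∑ s ∈ Finset.Ico (1:ℤ) h, ((k-1)*(2*s-1) - 2*(s*(k*s/h)) + k*s/h)
            = (k-1) * (∑ s ∈ Finset.Ico (1:ℤ) h, (2*s-1))
              - 2*(∑ s ∈ Finset.Ico (1:ℤ) h, s*(k*s/h))
              + ∑ s ∈ Finset.Ico (1:ℤ) h, k*s/h := by
          rw [Finset.mul_sum, Finset.mul_sum, ← Finset.sum_sub_distrib, ← Finset.sum_add_distrib]
        rw [split, hodd]

theorem dedekindSum_reciprocity (c d : ℤ) (hc : 0 < c) (hd : 0 < d) (hdc : IsCoprime c d) :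
    dedekindSum c d + dedekindSum d c =
      (1/12) * ((c : ℝ)/d + (d : ℝ)/c + 1/((c : ℝ)*d)) - 1/4 := by
  have hc0 : (c:ℝ) ≠ 0 := by exact_mod_cast hc.ne'
  have hd0 : (d:ℝ) ≠ 0 := by exact_mod_cast hd.ne'
  -- the integer sums
  set P1 : ℤ := ∑ r ∈ Finset.Ico (1:ℤ) c, r * (d * r % c) with hP1def
  set P2 : ℤ := ∑ s ∈ Finset.Ico (1:ℤ) d, s * (c * s % d) with hP2def
  set S2c : ℤ := ∑ r ∈ Finset.Ico (1:ℤ) c, r^2 with hS2cdef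
  set S2d : ℤ := ∑ s ∈ Finset.Ico (1:ℤ) d, s^2 with hS2ddef
  set A : ℤ := ∑ r ∈ Finset.Ico (1:ℤ) c, r * (d * r / c) with hAdef
  set B : ℤ := ∑ s ∈ Finset.Ico (1:ℤ) d, s * (c * s / d) with hBdef
  set C : ℤ := ∑ r ∈ Finset.Ico (1:ℤ) c, (d * r / c)^2 with hCdef
  set D' : ℤ := ∑ s ∈ Finset.Ico (1:ℤ) d, c * s / d with hDdef
  have e1 : P1 = d * S2c - c * A := ded_e1 d c
  have e6 : P2 = c * S2d - d * B := ded_e1 c d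
  have e2 : d^2 * S2c - 2*(d*c) * A + c^2 * C = S2c := ded_e2 d c hc hdc.symm
  have e4 : 2 * D' = (c-1) * (d-1) := ded_e4 c d hd hdc
  have e3 : C = (c-1)*(d-1)^2 - 2 * B + D' := ded_e3 d c hd hc hdc
  have e5 : S2c * 6 = c * (c-1) * (2*c-1) := sum_Ico_sq c hc
  have e7 : S2d * 6 = d * (d-1) * (2*d-1) := sum_Ico_sq d hd
  have key : 12*d^2*P1 + 12*c^2*P2
      = c^3*d + c*d^3 + c*d + 3*c^3*d^2 + 3*c^2*d^3 - 9*c^2*d^2 := by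
    linear_combination 12*d^2*e1 + 12*c^2*e6 + 6*d*e2 + (-6*c^2*d)*e3
      + (-3*c^2*d)*e4 + (d^3+d)*e5 + 2*c^3*e7
  have keyR : 12*(d:ℝ)^2*(P1:ℝ) + 12*(c:ℝ)^2*(P2:ℝ)
      = (c:ℝ)^3*d + c*(d:ℝ)^3 + c*d + 3*(c:ℝ)^3*(d:ℝ)^2 + 3*(c:ℝ)^2*(d:ℝ)^3
        - 9*(c:ℝ)^2*(d:ℝ)^2 := by exact_mod_cast key
  have hS1 : dedekindSum d c * ((c:ℝ)^2 * 4) = (P1:ℝ) * 4 - ((c:ℝ)-1) * (c:ℝ)^2 :=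
    dedekind_poly d c hd hc hdc
  have hS2 : dedekindSum c d * ((d:ℝ)^2 * 4) = (P2:ℝ) * 4 - ((d:ℝ)-1) * (d:ℝ)^2 :=
    dedekind_poly c d hc hd hdc.symm
  have hgoal : (dedekindSum c d + dedekindSum d c) * (12*(c:ℝ)^2*(d:ℝ)^2)
      = ((1/12) * ((c : ℝ)/d + (d : ℝ)/c + 1/((c : ℝ)*d)) - 1/4)
          * (12*(c:ℝ)^2*(d:ℝ)^2) := by
    have e : ((1/12) * ((c : ℝ)/d + (d : ℝ)/c + 1/((c : ℝ)*d)) - 1/4)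
        * (12*(c:ℝ)^2*(d:ℝ)^2)
        = (c:ℝ)^3*d + c*(d:ℝ)^3 + c*d - 3*(c:ℝ)^2*(d:ℝ)^2 := by
      field_simp
      ring
    rw [e]
    linear_combination 3*(c:ℝ)^2*hS2 + 3*(d:ℝ)^2*hS1 + keyR
  exact mul_right_cancel₀ (by positivity) hgoal
end

section
/- Let γ, τ be matrices in SL(2, ℝ) with entries γ = (a_γ, b_γ; c_γ, d_γ), τ = (a_τ, b_τ; c_τ, d_τ), and let γτ have entries (a_{γτ}, b_{γτ}; c_{γτ}, d_{γτ}). If c_γ c_τ c_{γτ} ≠ 0, then (a_γ + d_γ)/c_γ + (a_τ + d_τ)/c_τ - (a_{γτ} + d_{γτ})/c_{γτ} = c_γ/(c_τ c_{γτ}) + c_τ/(c_γ c_{γτ}) + c_{γτ}/(c_γ c_τ). -/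
open Matrix

/-- Cleared of denominators, the three-term identity is a polynomial identity valid over any
commutative ring: it is `det γ = det τ = 1` after expanding the entries of `γ * τ`. -/
theorem Matrix.SpecialLinearGroup.trace_mul_identity_fin_two {R : Type*} [CommRing R]
    (γ τ : SpecialLinearGroup (Fin 2) R) :
    (γ * τ) 1 0 * (τ 1 0 * trace (γ : Matrix (Fin 2) (Fin 2) R)
        + γ 1 0 * trace (τ : Matrix (Fin 2) (Fin 2) R))
      - γ 1 0 * τ 1 0 * trace ((γ * τ : SpecialLinearGroup (Fin 2) R) : Matrix (Fin 2) (Fin 2) R) =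
    γ 1 0 ^ 2 + τ 1 0 ^ 2 + (γ * τ) 1 0 ^ 2 := by
  have hγ := γ.2
  have hτ := τ.2
  rw [det_fin_two] at hγ hτ
  simp only [SpecialLinearGroup.coe_mul, trace_fin_two, mul_apply, Fin.sum_univ_two]
  linear_combination τ 1 0 ^ 2 * hγ + γ 1 0 ^ 2 * hτ

theorem trace_over_c_three_term (γ τ : Matrix.SpecialLinearGroup (Fin 2) ℝ)
    (h : γ 1 0 * τ 1 0 * (γ * τ) 1 0 ≠ 0) :
    (γ 0 0 + γ 1 1) / γ 1 0 + (τ 0 0 + τ 1 1) / τ 1 0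
      - ((γ * τ) 0 0 + (γ * τ) 1 1) / (γ * τ) 1 0 =
    γ 1 0 / (τ 1 0 * (γ * τ) 1 0) + τ 1 0 / (γ 1 0 * (γ * τ) 1 0)
      + (γ * τ) 1 0 / (γ 1 0 * τ 1 0) := by
  obtain ⟨⟨hγ, hτ⟩, hγτ⟩ : (γ 1 0 ≠ 0 ∧ τ 1 0 ≠ 0) ∧ (γ * τ) 1 0 ≠ 0 := by
    simpa only [ne_eq, mul_eq_zero, not_or] using h
  have key := SpecialLinearGroup.trace_mul_identity_fin_two γ τ
  rw [trace_fin_two, trace_fin_two, trace_fin_two] at key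
  field_simp
  linear_combination key
end

section
/- Let Γ be a group, f : Γ → ℂ an additive homomorphism, V > 0, and θ : Γ → ℝ a function satisfying θ(γτ) = θ(γ) + θ(τ) + (V/(2π)) Im(f(γ) · conj(f(τ))) for all γ, τ ∈ Γ. Then θ(γτ) - θ(γ) - θ(τ) = (1/2) θ([γ, τ]) for all γ, τ ∈ Γ, where [γ, τ] = γτγ⁻¹τ⁻¹. -/
open Real Complex

theorem theta_defect_eq_half_commutator {Γ : Type*} [Group Γ] (f : Γ → ℂ)
    (hf : ∀ γ τ : Γ, f (γ * τ) = f γ + f τ) (V : ℝ) (hV : 0 < V) (θ : Γ → ℝ)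
    (hθ : ∀ γ τ : Γ, θ (γ * τ) = θ γ + θ τ + (V / (2 * π)) * (f γ * (starRingEnd ℂ) (f τ)).im) :
    ∀ γ τ : Γ, θ (γ * τ) - θ γ - θ τ = (1/2) * θ (γ * τ * γ⁻¹ * τ⁻¹) := by
  have hself : ∀ z : ℂ, (z * (starRingEnd ℂ) z).im = 0 := by
    intro z; simp [Complex.mul_im]; ring
  have hskew : ∀ z w : ℂ, (w * (starRingEnd ℂ) z).im = -(z * (starRingEnd ℂ) w).im := by
    intro z w; simp [Complex.mul_im]; ring
  have hf1 : f 1 = 0 := by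
    have h := hf 1 1; simp at h; exact h
  have hfinv : ∀ γ : Γ, f γ⁻¹ = -f γ := by
    intro γ
    have := hf γ γ⁻¹; simp [hf1] at this; linear_combination -this
  have hθ1 : θ 1 = 0 := by
    have := hθ 1 1; simp [hf1] at this; linarith
  have hθinv : ∀ γ : Γ, θ γ⁻¹ = -θ γ := by
    intro γ
    have := hθ γ γ⁻¹
    simp [hθ1, hfinv, hself] at this
    linarith
  intro γ τ
  have h1 := hθ (γ * τ * γ⁻¹) τ⁻¹
  have h2 := hθ (γ * τ) γ⁻¹
  have h3 := hθ γ τ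
  have e1 : f (γ * τ * γ⁻¹) = f τ := by
    rw [hf, hf, hfinv]; ring
  have e2 : (f τ * (starRingEnd ℂ) (f τ⁻¹)).im = 0 := by
    rw [hfinv]; simp [Complex.mul_im]; ring
  rw [e1, e2, hθinv τ] at h1
  rw [hf, hfinv, hθinv γ] at h2
  have e3 : ((f γ + f τ) * (starRingEnd ℂ) (-f γ)).im
      = (f γ * (starRingEnd ℂ) (f τ)).im := by
    simp [Complex.mul_im, Complex.add_re, Complex.add_im]; ring
  rw [e3] at h2
  rw [h3]
  linarith [h1, h2]
end

section
/- Let Γ be a group, f : Γ → ℂ an additive homomorphism, V > 0 real, and θ : Γ → ℝ a function with θ(γτ) = θ(γ) + θ(τ) + (V/(2π)) Im(f(γ) conj(f(τ))) for all γ, τ. Then for any elements γ₁, ..., γ_m ∈ Γ and integers k₁, ..., k_m, θ(γ₁^{k₁} ··· γ_m^{k_m}) = Σᵢ kᵢ θ(γᵢ) + (1/2) Σ_{1 ≤ i < j ≤ m} kᵢ kⱼ θ([γᵢ, γⱼ]), where [γᵢ, γⱼ] = γᵢγⱼγᵢ⁻¹γⱼ⁻¹. -/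
/-!
Write `B (z, w) = (V / 2π) Im (z * conj w)`, an alternating bi-additive form, so that
`θ (γ τ) = θ γ + θ τ + B (f γ, f τ)`. Expanding a product of `n` factors by induction gives
`θ (g₁ ⋯ gₙ) = ∑ θ gᵢ + ∑_{i<j} B (f gᵢ, f gⱼ)`. Since `B` is alternating, `n ↦ θ (γ ^ n)` is additive,
so `θ (γ ^ k) = k θ γ`, and `θ [γ, τ] = B (f γ, f τ) - B (f τ, f γ) = 2 B (f γ, f τ)`. Substituting
`gᵢ = γᵢ ^ kᵢ` and using bilinearity of `B` gives the formula.
-/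

open Real Complex

section AdditiveMap

variable {Γ A : Type*} [Group Γ] [AddGroup A] {f : Γ → A}

theorem map_one_of_map_mul (hf : ∀ a b, f (a * b) = f a + f b) : f 1 = 0 := by
  simpa using hf 1 1

theorem map_zpow_of_map_mul (hf : ∀ a b, f (a * b) = f a + f b) (a : Γ) (n : ℤ) :
    f (a ^ n) = n • f a :=
  congrArg Multiplicative.toAdd ((MonoidHom.mk' (Multiplicative.ofAdd ∘ f) hf).map_zpow a n)

theorem map_list_prod_of_map_mul (hf : ∀ a b, f (a * b) = f a + f b) (l : List Γ) :
    f l.prod = (l.map f).sum := by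
  induction l with
  | nil => exact map_one_of_map_mul hf
  | cons a l ih => rw [List.prod_cons, hf, ih, List.map_cons, List.sum_cons]

end AdditiveMap

theorem AddMonoidHom.apply_swap_eq_neg_of_apply_self {A M : Type*} [AddCommGroup A]
    [AddCommGroup M] {B : A →+ A →+ M} (hB : ∀ x, B x x = 0) (x y : A) : B y x = -B x y := by
  have h := hB (x + y)
  simp only [map_add, AddMonoidHom.add_apply, hB, zero_add, add_zero] at h
  exact eq_neg_of_add_eq_zero_left h

def IsTwistedHom {Γ A M : Type*} [Mul Γ] [AddZeroClass A] [AddCommMonoid M]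
    (B : A →+ A →+ M) (f : Γ → A) (θ : Γ → M) : Prop :=
  ∀ a b, θ (a * b) = θ a + θ b + B (f a) (f b)

namespace IsTwistedHom

variable {Γ A M : Type*} [Group Γ] [AddCommGroup A] [AddCommGroup M]
  {B : A →+ A →+ M} {f : Γ → A} {θ : Γ → M}

theorem map_one (h : IsTwistedHom B f θ) (hf : ∀ a b, f (a * b) = f a + f b) : θ 1 = 0 := by
  simpa [map_one_of_map_mul hf] using h 1 1

theorem map_list_prod_ofFn (h : IsTwistedHom B f θ) (hf : ∀ a b, f (a * b) = f a + f b) :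
    ∀ {n : ℕ} (g : Fin n → Γ), θ (List.ofFn g).prod =
      ∑ i, θ (g i) + ∑ i, ∑ j ∈ Finset.Ioi i, B (f (g i)) (f (g j))
  | 0, g => by simp [h.map_one hf]
  | n + 1, g => by
    rw [List.ofFn_succ, List.prod_cons, h, map_list_prod_of_map_mul hf, List.map_ofFn,
      List.sum_ofFn, map_sum, map_list_prod_ofFn h hf, Fin.sum_univ_succ, Fin.sum_univ_succ,
      Fin.sum_Ioi_zero]
    simp only [Function.comp_apply, Fin.sum_Ioi_succ]
    abel

theorem map_zpow (h : IsTwistedHom B f θ) (hf : ∀ a b, f (a * b) = f a + f b)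
    (hB : ∀ x, B x x = 0) (a : Γ) (n : ℤ) : θ (a ^ n) = n • θ a := by
  -- `n ↦ θ (a ^ n)` is additive, since `B (m • f a) (n • f a) = (m * n) • B (f a) (f a) = 0`.
  let θa : ℤ →+ M := AddMonoidHom.mk' (fun n => θ (a ^ n)) fun m n => by
    simp [zpow_add, h _ _, map_zpow_of_map_mul hf, hB]
  simpa [θa] using AddMonoidHom.apply_int _ θa n

theorem map_inv (h : IsTwistedHom B f θ) (hf : ∀ a b, f (a * b) = f a + f b)
    (hB : ∀ x, B x x = 0) (a : Γ) : θ a⁻¹ = -θ a := by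
  simpa using h.map_zpow hf hB a (-1)

theorem map_commutator (h : IsTwistedHom B f θ) (hf : ∀ a b, f (a * b) = f a + f b)
    (hB : ∀ x, B x x = 0) (a b : Γ) : θ (a * b * a⁻¹ * b⁻¹) = 2 • B (f a) (f b) := by
  have hfinv : ∀ c, f c⁻¹ = -f c := fun c => by simpa using map_zpow_of_map_mul hf c (-1)
  simp only [h _ _, hf, hfinv, h.map_inv hf hB, map_add, map_neg, AddMonoidHom.add_apply,
    AddMonoidHom.neg_apply, hB, B.apply_swap_eq_neg_of_apply_self hB (f a) (f b)]
  abel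

theorem map_list_prod_ofFn_zpow (h : IsTwistedHom B f θ) (hf : ∀ a b, f (a * b) = f a + f b)
    (hB : ∀ x, B x x = 0) {n : ℕ} (γ : Fin n → Γ) (k : Fin n → ℤ) :
    θ (List.ofFn fun i => γ i ^ k i).prod =
      ∑ i, k i • θ (γ i) + ∑ i, ∑ j ∈ Finset.Ioi i, (k i * k j) • B (f (γ i)) (f (γ j)) := by
  simp only [h.map_list_prod_ofFn hf, h.map_zpow hf hB, map_zpow_of_map_mul hf, map_zsmul,
    AddMonoidHom.zsmul_apply, mul_smul, smul_comm (k _) (k _)]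

end IsTwistedHom

def imMulConjForm (c : ℝ) : ℂ →+ ℂ →+ ℝ :=
  AddMonoidHom.mk'
    (fun z => AddMonoidHom.mk' (fun w => c * (z * starRingEnd ℂ w).im) fun w w' => by
      simp only [map_add, mul_add, add_im])
    fun z z' => by ext w; simp only [add_mul, add_im, mul_add]; rfl

theorem imMulConjForm_apply_self (c : ℝ) (z : ℂ) : imMulConjForm c z z = 0 := by
  show c * (z * starRingEnd ℂ z).im = 0
  simp [mul_conj]

theorem theta_word_formula_general {Γ : Type*} [Group Γ] (f : Γ → ℂ)
    (hf : ∀ γ τ : Γ, f (γ * τ) = f γ + f τ) (V : ℝ) (θ : Γ → ℝ)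
    (hθ : ∀ γ τ : Γ, θ (γ * τ) = θ γ + θ τ + (V / (2 * π)) * (f γ * (starRingEnd ℂ) (f τ)).im)
    (m : ℕ) (γ : Fin m → Γ) (k : Fin m → ℤ) :
    θ (List.ofFn fun i => γ i ^ k i).prod =
      ∑ i : Fin m, (k i : ℝ) * θ (γ i) +
      (1/2) * ∑ i : Fin m, ∑ j ∈ Finset.Ioi i,
        (k i : ℝ) * (k j : ℝ) * θ (γ i * γ j * (γ i)⁻¹ * (γ j)⁻¹) := by
  have hθ' : IsTwistedHom (imMulConjForm (V / (2 * π))) f θ := hθ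
  have hB := imMulConjForm_apply_self (V / (2 * π))
  rw [hθ'.map_list_prod_ofFn_zpow hf hB]
  simp only [hθ'.map_commutator hf hB, zsmul_eq_mul, nsmul_eq_mul, Int.cast_mul,
    Finset.mul_sum]
  congr 1
  refine Finset.sum_congr rfl fun i _ => Finset.sum_congr rfl fun j _ => ?_
  ring

theorem theta_word_formula {Γ : Type*} [Group Γ] (f : Γ → ℂ)
    (hf : ∀ γ τ : Γ, f (γ * τ) = f γ + f τ) (V : ℝ) (hV : 0 < V) (θ : Γ → ℝ)
    (hθ : ∀ γ τ : Γ, θ (γ * τ) = θ γ + θ τ + (V / (2 * π)) * (f γ * (starRingEnd ℂ) (f τ)).im)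
    (m : ℕ) (γ : Fin m → Γ) (k : Fin m → ℤ) :
    θ (List.ofFn fun i => γ i ^ k i).prod =
      ∑ i : Fin m, (k i : ℝ) * θ (γ i) +
      (1/2) * ∑ i : Fin m, ∑ j ∈ Finset.Ioi i,
        (k i : ℝ) * (k j : ℝ) * θ (γ i * γ j * (γ i)⁻¹ * (γ j)⁻¹) :=
  theta_word_formula_general f hf V θ hθ m γ k
end
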